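/- Correctness of taint propagation through function application: let f : T₁ → ⋯ → Tₙ → T be any n-ary function (n arbitrary, stated e.g. for n = 2), let Δ₁ : X × 𝕍 → T₁ and Δ₂ : X × 𝕍 → T₂ be terms with SICs Ψ₁, Ψ₂ w.r.t. X, and let Θ : 𝕍 → Prop be any SIC for the term fun (x,v) => f (Δ₁ (x,v)) (Δ₂ (x,v)) w.r.t. X. Then fun v => Θ v ∨ (Ψ₁ v ∧ Ψ₂ v) is also a SIC for fun (x,v) => f (Δ₁ (x,v)) (Δ₂ (x,v)) w.r.t. X. -/

import Mathlib

/-- `Ψ` is a sufficient independence condition for the term `Δ` with respect to `X`. -/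
def IsSIC {X 𝕍 T : Type*} (Δ : X × 𝕍 → T) (Ψ : 𝕍 → Prop) : Prop :=
  ∀ v, Ψ v → ∀ x y : X, Δ (x, v) = Δ (y, v)

namespace IsSIC

variable {X 𝕍 T : Type*}

theorem or {Δ : X × 𝕍 → T} {Θ Ψ : 𝕍 → Prop} (hΘ : IsSIC Δ Θ) (hΨ : IsSIC Δ Ψ) :
    IsSIC Δ fun v => Θ v ∨ Ψ v :=
  fun v hv => hv.elim (hΘ v) (hΨ v)

theorem map₂ {T₁ T₂ : Type*} (f : T₁ → T₂ → T) {Δ₁ : X × 𝕍 → T₁} {Δ₂ : X × 𝕍 → T₂}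
    {Ψ₁ Ψ₂ : 𝕍 → Prop} (h₁ : IsSIC Δ₁ Ψ₁) (h₂ : IsSIC Δ₂ Ψ₂) :
    IsSIC (fun p => f (Δ₁ p) (Δ₂ p)) fun v => Ψ₁ v ∧ Ψ₂ v :=
  fun v hv x y => congrArg₂ f (h₁ v hv.1 x y) (h₂ v hv.2 x y)

end IsSIC

/-- Correctness of taint propagation through function application (binary case). -/
theorem inferSIC_correct {X 𝕍 T₁ T₂ T : Type*} (f : T₁ → T₂ → T)
    (Δ₁ : X × 𝕍 → T₁) (Δ₂ : X × 𝕍 → T₂) (Ψ₁ Ψ₂ Θ : 𝕍 → Prop)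
    (h₁ : ∀ v, Ψ₁ v → ∀ x y : X, Δ₁ (x, v) = Δ₁ (y, v))
    (h₂ : ∀ v, Ψ₂ v → ∀ x y : X, Δ₂ (x, v) = Δ₂ (y, v))
    (hΘ : ∀ v, Θ v → ∀ x y : X, f (Δ₁ (x, v)) (Δ₂ (x, v)) = f (Δ₁ (y, v)) (Δ₂ (y, v))) :
    ∀ v, (fun v => Θ v ∨ (Ψ₁ v ∧ Ψ₂ v)) v →
      ∀ x y : X, f (Δ₁ (x, v)) (Δ₂ (x, v)) = f (Δ₁ (y, v)) (Δ₂ (y, v)) :=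
  IsSIC.or (Δ := fun p => f (Δ₁ p) (Δ₂ p)) hΘ (IsSIC.map₂ f h₁ h₂)
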